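/- For every natural number n, the curve produced by the unfolding construction equals the curve produced by the folding construction: dragonU n = dragonF n. -/
import Mathlib


inductive Turn : Type
  | L
  | R
deriving DecidableEq

open Turn

def inv : Turn → Turn
  | L => R
  | R => L

def interleave {α : Type*} : Stream' α → List α → List α
  | zs, [] => [zs.head]
  | zs, y :: ys => zs.head :: y :: interleave zs.tail ys

infixr:67 " ▷ " => interleave

def lr : Stream' Turn := fun n => if n % 2 = 0 then L else R

def rl : Stream' Turn := fun n => if n % 2 = 0 then R else L

def dragonU : ℕ → List Turn
  | 0 => []
  | n + 1 => dragonU n ++ [L] ++ List.map inv (List.reverse (dragonU n))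

def dragonF : ℕ → List Turn
  | 0 => []
  | n + 1 => lr ▷ dragonF n

/-! ### Auxiliary machinery -/

def iaux {α : Type*} : Stream' α → List α → List α
  | _, [] => []
  | zs, y :: ys => zs.head :: y :: iaux zs.tail ys

lemma stream_tail_apply {α : Type*} (zs : Stream' α) (n : ℕ) : zs.tail n = zs (n + 1) := rfl

lemma interleave_eq_iaux {α : Type*} : ∀ (ys : List α) (zs : Stream' α),
    zs ▷ ys = iaux zs ys ++ [zs ys.length]
  | [], zs => rfl
  | y :: ys, zs => by
    simp [interleave, iaux, interleave_eq_iaux ys zs.tail, stream_tail_apply]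

lemma interleave_append {α : Type*} : ∀ (a : List α) (zs : Stream' α) (c : List α),
    zs ▷ (a ++ c) = iaux zs a ++ (Stream'.drop a.length zs ▷ c)
  | [], _, _ => rfl
  | x :: a, zs, c => by
    have h : Stream'.drop (x :: a).length zs = Stream'.drop a.length zs.tail := rfl
    simp [interleave, iaux, interleave_append a zs.tail c, h]

lemma interleave_snoc {α : Type*} (ys : List α) (zs : Stream' α) (x : α) :
    zs ▷ (ys ++ [x]) = (zs ▷ ys) ++ [x, zs (ys.length + 1)] := by
  rw [interleave_append, interleave_eq_iaux ys zs]
  have h : Stream'.drop ys.length zs ▷ [x]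
      = [zs.get (0 + ys.length), x, zs.get (1 + ys.length)] := rfl
  rw [h]
  simp [Stream'.get, Nat.add_comm]

lemma map_inv_interleave : ∀ (ys : List Turn) (zs : Stream' Turn),
    List.map inv (zs ▷ ys) = (fun n => inv (zs n)) ▷ List.map inv ys
  | [], zs => rfl
  | y :: ys, zs => by
    simp only [interleave, List.map_cons, map_inv_interleave ys zs.tail]
    rfl

lemma inv_comp_lr : (fun n => inv (lr n)) = rl := by
  funext n; simp only [lr, rl]; split <;> rfl

lemma inv_comp_rl : (fun n => inv (rl n)) = lr := by
  funext n; simp only [lr, rl]; split <;> rfl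

lemma lr_apply_even {n : ℕ} (h : n % 2 = 0) : lr n = L := by simp [lr, h]
lemma lr_apply_odd {n : ℕ} (h : n % 2 = 1) : lr n = R := by simp [lr, h]
lemma rl_apply_even {n : ℕ} (h : n % 2 = 0) : rl n = R := by simp [rl, h]
lemma rl_apply_odd {n : ℕ} (h : n % 2 = 1) : rl n = L := by simp [rl, h]

lemma lr_tail : lr.tail = rl := by
  funext n
  rcases Nat.mod_two_eq_zero_or_one n with h | h
  · rw [stream_tail_apply, lr_apply_odd (by omega), rl_apply_even h]
  · rw [stream_tail_apply, lr_apply_even (by omega), rl_apply_odd h]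

lemma rl_tail : rl.tail = lr := by
  funext n
  rcases Nat.mod_two_eq_zero_or_one n with h | h
  · rw [stream_tail_apply, rl_apply_odd (by omega), lr_apply_even h]
  · rw [stream_tail_apply, rl_apply_even (by omega), lr_apply_odd h]

lemma lr_head : lr.head = L := rfl
lemma rl_head : rl.head = R := rfl

lemma drop_lr (k : ℕ) : Stream'.drop k lr = if k % 2 = 0 then lr else rl := by
  rcases Nat.mod_two_eq_zero_or_one k with h | h
  · rw [if_pos h]; funext n
    show lr (n + k) = lr n
    rcases Nat.mod_two_eq_zero_or_one n with hn | hn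
    · rw [lr_apply_even (by omega), lr_apply_even hn]
    · rw [lr_apply_odd (by omega), lr_apply_odd hn]
  · rw [if_neg (by omega)]; funext n
    show lr (n + k) = rl n
    rcases Nat.mod_two_eq_zero_or_one n with hn | hn
    · rw [lr_apply_odd (by omega), rl_apply_even hn]
    · rw [lr_apply_even (by omega), rl_apply_odd hn]

lemma rev_interleave : ∀ ys : List Turn,
    (lr ▷ ys).reverse = (if ys.length % 2 = 0 then lr else rl) ▷ ys.reverse ∧
    (rl ▷ ys).reverse = (if ys.length % 2 = 0 then rl else lr) ▷ ys.reverse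
  | [] => ⟨rfl, rfl⟩
  | y :: ys => by
    obtain ⟨h1, h2⟩ := rev_interleave ys
    have e1 : lr ▷ (y :: ys) = L :: y :: (rl ▷ ys) := by
      show lr.head :: y :: (lr.tail ▷ ys) = _
      rw [lr_head, lr_tail]
    have e2 : rl ▷ (y :: ys) = R :: y :: (lr ▷ ys) := by
      show rl.head :: y :: (rl.tail ▷ ys) = _
      rw [rl_head, rl_tail]
    have hlen : ys.reverse.length = ys.length := ys.length_reverse
    rcases Nat.mod_two_eq_zero_or_one ys.length with h | h
    · rw [if_pos h] at h1 h2
      constructor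
      · rw [e1, List.length_cons, if_neg (by omega)]
        simp only [List.reverse_cons]
        rw [interleave_snoc, hlen, rl_apply_odd (by omega), ← h2]
        simp
      · rw [e2, List.length_cons, if_neg (by omega)]
        simp only [List.reverse_cons]
        rw [interleave_snoc, hlen, lr_apply_odd (by omega), ← h1]
        simp
    · rw [if_neg (by omega)] at h1 h2
      constructor
      · rw [e1, List.length_cons, if_pos (by omega)]
        simp only [List.reverse_cons]
        rw [interleave_snoc, hlen, lr_apply_even (by omega), ← h2]
        simp
      · rw [e2, List.length_cons, if_pos (by omega)]
        simp only [List.reverse_cons]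
        rw [interleave_snoc, hlen, rl_apply_even (by omega), ← h1]
        simp

lemma key : ∀ n : ℕ, lr ▷ dragonF n = dragonF n ++ [L] ++ List.map inv (dragonF n).reverse
  | 0 => rfl
  | n + 1 => by
    have ih := key n
    set d := dragonF n with hd
    show lr ▷ (lr ▷ d) = (lr ▷ d) ++ [L] ++ List.map inv (lr ▷ d).reverse
    have hrev := (rev_interleave d).1
    rw [hrev, map_inv_interleave]
    conv_lhs => rw [ih]
    rw [List.append_assoc, interleave_append, drop_lr]
    rw [interleave_eq_iaux d lr]
    rcases Nat.mod_two_eq_zero_or_one d.length with h | h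
    · rw [if_pos h, inv_comp_lr, lr_apply_even h]
      have hx : lr ▷ ([L] ++ List.map inv d.reverse)
          = L :: L :: (rl ▷ List.map inv d.reverse) := by
        show lr.head :: L :: (lr.tail ▷ _) = _
        rw [lr_head, lr_tail]; rfl
      rw [hx]
      simp
    · rw [if_neg (by omega), inv_comp_rl, lr_apply_odd h]
      have hx : rl ▷ ([L] ++ List.map inv d.reverse)
          = R :: L :: (lr ▷ List.map inv d.reverse) := by
        show rl.head :: L :: (rl.tail ▷ _) = _
        rw [rl_head, rl_tail]; rfl
      rw [hx]
      simp

theorem dragonU_eq_dragonF : ∀ n : ℕ, dragonU n = dragonF n := by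
  intro n
  induction n with
  | zero => rfl
  | succ n ih =>
    show dragonU n ++ [L] ++ List.map inv (dragonU n).reverse = lr ▷ dragonF n
    rw [ih, ← key n]
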